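/- The number of sequences q of length n over {A,C,G,T} with GC-content w (i.e., exactly w coordinates in {G,C}) and no two consecutive Watson-Crick complementary letters (μ_1(q) = 0) equals the coefficient of x^n y^w in the formal power series expansion of Φ(x,y) = (1 − 2x/(1+x) − 2xy/(1+xy))^{−1}. -/

import Mathlib

inductive Base : Type
  | A | C | G | T
deriving DecidableEq

instance : Fintype Base :=
  ⟨{Base.A, Base.C, Base.G, Base.T}, fun x => by cases x <;> simp⟩

def Base.compl : Base → Base
  | .A => .T
  | .T => .A
  | .C => .G
  | .G => .C

open MvPowerSeries in
/-- The Goulden-Jackson generating function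
`Φ(x,y) = (1 - 2x/(1+x) - 2xy/(1+xy))⁻¹`, with `x = X 0`, `y = X 1`. -/
noncomputable def Phi : MvPowerSeries (Fin 2) ℚ :=
  (1 - 2 * X 0 * (1 + X 0)⁻¹ - 2 * (X 0 * X 1) * (1 + X 0 * X 1)⁻¹)⁻¹

/-! Let `T` be the generating series of admissible words (no factor `b b̄`), weighted by
`x^length y^GC`, and `S b` that of admissible words beginning with `b`. Removing the first
letter gives `S b = x_b (T - S b̄)` with `x_A = x_T = x` and `x_C = x_G = xy`, hence
`S b + S b̄ = 2 x_b (1 + x_b)⁻¹ T`; together with `T = 1 + ∑ b, S b` this says `T * Φ⁻¹ = 1`. -/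

open MvPowerSeries Finsupp

namespace Base

def gcCount (b : Base) : ℕ := if b = G ∨ b = C then 1 else 0

noncomputable def weight (b : Base) : Fin 2 →₀ ℕ := single 0 1 + single 1 b.gcCount

lemma sum_univ {M : Type*} [AddCommMonoid M] (f : Base → M) :
    ∑ b, f b = f .A + f .T + (f .C + f .G) := by
  rw [show (Finset.univ : Finset Base) = {.A, .C, .G, .T} from rfl]
  simp only [Finset.mem_insert, Finset.mem_singleton, reduceCtorEq, or_self, not_false_eq_true,
    Finset.sum_insert, Finset.sum_singleton]
  abel

end Base

lemma Nat.card_and_add_card_and_not {α : Type*} (p q : α → Prop) [Finite {a // p a}] :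
    Nat.card {a // p a ∧ q a} + Nat.card {a // p a ∧ ¬ q a} = Nat.card {a // p a} := by
  rw [← Nat.card_congr (Equiv.subtypeSubtypeEquivSubtypeInter p q),
    ← Nat.card_congr (Equiv.subtypeSubtypeEquivSubtypeInter p (¬ q ·)), ← Nat.card_sum]
  classical exact Nat.card_congr (Equiv.sumCompl _)

lemma Nat.card_eq_sum_card_fiber {α ι : Type*} [Fintype ι] (p : α → Prop) (f : α → ι)
    [Finite {a // p a}] : Nat.card {a // p a} = ∑ i, Nat.card {a // p a ∧ f a = i} := by
  rw [← Nat.card_congr (Equiv.sigmaFiberEquiv fun a : {a // p a} => f a), Nat.card_sigma]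
  exact Finset.sum_congr rfl fun i _ =>
    Nat.card_congr (Equiv.subtypeSubtypeEquivSubtypeInter p (f · = i))

lemma MvPowerSeries.add_eq_of_eq_mul_sub_of_eq_mul_sub {σ k : Type*} [Field k]
    {s s' t x : MvPowerSeries σ k} (hx : constantCoeff x = 0)
    (h : s = x * (t - s')) (h' : s' = x * (t - s)) :
    s + s' = 2 * x * (1 + x)⁻¹ * t := by
  rw [mul_right_comm, MvPowerSeries.eq_mul_inv_iff_mul_eq (by simp [hx])]
  linear_combination h + h'

def List.consSubtypeEquiv {α : Type*} (P : List α → Prop) (b : α) :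
    {l // P (b :: l)} ≃ {l // P l ∧ l.head? = some b} where
  toFun l := ⟨b :: l.1, l.2, rfl⟩
  invFun l := ⟨l.1.tail, by
    obtain ⟨_ | ⟨a, l⟩, hP, hb⟩ := l
    · simp at hb
    · simp only [List.head?_cons, Option.some.injEq] at hb
      exact hb ▸ hP⟩
  left_inv _ := rfl
  right_inv l := by
    obtain ⟨_ | ⟨a, l⟩, hP, hb⟩ := l
    · simp at hb
    · simp only [List.head?_cons, Option.some.injEq] at hb
      subst hb; rfl

lemma monomial_weight (b : Base) :
    monomial b.weight (1 : ℚ) = X 0 * X 1 ^ b.gcCount := by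
  rw [X_pow_eq, X, monomial_mul_monomial, mul_one, Base.weight]

noncomputable def wordWeight (l : List Base) : Fin 2 →₀ ℕ := (l.map Base.weight).sum

@[simp] lemma wordWeight_cons (b : Base) (l : List Base) :
    wordWeight (b :: l) = b.weight + wordWeight l := by
  simp [wordWeight]

lemma wordWeight_apply_zero (l : List Base) : wordWeight l 0 = l.length := by
  induction l with
  | nil => rfl
  | cons b l ih => simp [ih, Base.weight, add_comm]

lemma wordWeight_ofFn {n : ℕ} (q : Fin n → Base) :
    wordWeight (List.ofFn q) =
      single 0 n + single 1 (Finset.univ.filter fun i => q i = .G ∨ q i = .C).card := by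
  rw [Finset.card_filter]
  simp only [wordWeight, List.map_ofFn, List.sum_ofFn, Function.comp_apply, Base.weight,
    Finset.sum_add_distrib, ← Finsupp.single_finsetSum, Base.gcCount]
  simp

instance (m : Fin 2 →₀ ℕ) (p : List Base → Prop) : Finite {l // wordWeight l = m ∧ p l} :=
  Set.Finite.to_subtype <| (List.finite_length_eq Base (m 0)).subset fun l hl => by
    simp [← hl.1, wordWeight_apply_zero]

def IsAdmissible (l : List Base) : Prop := l.IsChain fun a b => b ≠ a.compl

lemma isAdmissible_cons (b : Base) (l : List Base) :
    IsAdmissible (b :: l) ↔ IsAdmissible l ∧ ¬ l.head? = some b.compl := by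
  rw [IsAdmissible, List.isChain_cons, and_comm]
  exact and_congr_right fun _ => by cases l <;> simp

noncomputable def wordSeries (p : List Base → Prop) : MvPowerSeries (Fin 2) ℚ :=
  fun m => Nat.card {l // wordWeight l = m ∧ p l}

lemma coeff_wordSeries (p : List Base → Prop) (m : Fin 2 →₀ ℕ) :
    coeff m (wordSeries p) = Nat.card {l // wordWeight l = m ∧ p l} := rfl

lemma wordSeries_and_add_and_not (p q : List Base → Prop) :
    wordSeries (fun l => p l ∧ q l) + wordSeries (fun l => p l ∧ ¬ q l) = wordSeries p := by
  ext m
  have h := Nat.card_and_add_card_and_not (fun l => wordWeight l = m ∧ p l) q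
  simp only [and_assoc] at h
  simp only [map_add, coeff_wordSeries]
  exact_mod_cast h

lemma wordSeries_eq_sum_head (p : List Base → Prop) :
    wordSeries p = ∑ o : Option Base, wordSeries (fun l => p l ∧ l.head? = o) := by
  ext m
  have h := Nat.card_eq_sum_card_fiber (fun l => wordWeight l = m ∧ p l) List.head?
  simp only [and_assoc] at h
  simp only [map_sum, coeff_wordSeries]
  exact_mod_cast h

lemma wordSeries_head_eq_none (p : List Base → Prop) (hp : p []) :
    wordSeries (fun l => p l ∧ l.head? = none) = 1 := by
  ext m
  rw [coeff_wordSeries, coeff_one]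
  simp only [List.head?_eq_none_iff]
  split_ifs with hm
  · subst hm
    rw [Nat.cast_eq_one, Nat.card_eq_one_iff_unique]
    exact ⟨⟨fun l l' => Subtype.ext (l.2.2.2.trans l'.2.2.2.symm)⟩, ⟨⟨[], rfl, hp, rfl⟩⟩⟩
  · rw [Nat.cast_eq_zero, Nat.card_eq_zero]
    exact .inl ⟨fun ⟨l, hl, _, hnil⟩ => hm (by rw [← hl, hnil]; rfl)⟩

lemma wordSeries_head_eq_some (p : List Base → Prop) (b : Base) :
    wordSeries (fun l => p l ∧ l.head? = some b) =
      monomial b.weight 1 * wordSeries (fun l => p (b :: l)) := by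
  ext m
  rw [coeff_monomial_mul, coeff_wordSeries, coeff_wordSeries, one_mul]
  have h := Nat.card_congr (List.consSubtypeEquiv (fun l => wordWeight l = m ∧ p l) b)
  simp only [and_assoc, wordWeight_cons] at h
  rw [← h]
  split_ifs with hm
  · simp only [add_comm b.weight, ← eq_tsub_iff_add_eq_of_le hm]
  · rw [Nat.cast_eq_zero, Nat.card_eq_zero]
    exact .inl ⟨fun l => hm (l.2.1 ▸ le_self_add)⟩

lemma wordSeries_isAdmissible_eq_one_add_sum :
    wordSeries IsAdmissible =
      1 + ∑ b, wordSeries (fun l => IsAdmissible l ∧ l.head? = some b) := by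
  rw [wordSeries_eq_sum_head, Fintype.sum_option,
    wordSeries_head_eq_none IsAdmissible List.isChain_nil]

lemma wordSeries_isAdmissible_head_eq_some (b : Base) :
    wordSeries (fun l => IsAdmissible l ∧ l.head? = some b) =
      X 0 * X 1 ^ b.gcCount * (wordSeries IsAdmissible -
        wordSeries (fun l => IsAdmissible l ∧ l.head? = some b.compl)) := by
  rw [wordSeries_head_eq_some, monomial_weight, ← wordSeries_and_add_and_not IsAdmissible,
    add_sub_cancel_left]
  simp only [isAdmissible_cons]

theorem wordSeries_isAdmissible_eq_Phi : wordSeries IsAdmissible = Phi := by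
  set T := wordSeries IsAdmissible
  set S := fun b => wordSeries (fun l => IsAdmissible l ∧ l.head? = some b)
  have hS (b : Base) : S b = X 0 * X 1 ^ b.gcCount * (T - S b.compl) :=
    wordSeries_isAdmissible_head_eq_some b
  have hAT : S .A + S .T = 2 * X 0 * (1 + X 0)⁻¹ * T :=
    add_eq_of_eq_mul_sub_of_eq_mul_sub (by simp) (by simpa [Base.gcCount, Base.compl] using hS .A)
      (by simpa [Base.gcCount, Base.compl] using hS .T)
  have hCG : S .C + S .G = 2 * (X 0 * X 1) * (1 + X 0 * X 1)⁻¹ * T :=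
    add_eq_of_eq_mul_sub_of_eq_mul_sub (by simp) (by simpa [Base.gcCount, Base.compl] using hS .C)
      (by simpa [Base.gcCount, Base.compl] using hS .G)
  have hT : T = 1 + ∑ b, S b := wordSeries_isAdmissible_eq_one_add_sum
  rw [Base.sum_univ, hAT, hCG] at hT
  rw [Phi, MvPowerSeries.eq_inv_iff_mul_eq_one (by simp)]
  linear_combination hT

lemma wordWeight_ofFn_eq_and_isAdmissible_iff {n : ℕ} (q : Fin n → Base) (w : ℕ) :
    (wordWeight (List.ofFn q) = single 0 n + single 1 w ∧ IsAdmissible (List.ofFn q)) ↔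
      ((Finset.univ.filter fun i => q i = .G ∨ q i = .C).card = w ∧
        ∀ ℓ, ∀ h : ℓ + 1 < n,
          q ⟨ℓ + 1, h⟩ ≠ (q ⟨ℓ, Nat.lt_of_succ_lt h⟩).compl) := by
  rw [wordWeight_ofFn, IsAdmissible, List.isChain_ofFn, add_right_inj,
    (single_injective 1).eq_iff]

lemma coeff_wordSeries_isAdmissible (n w : ℕ) :
    coeff (single 0 n + single 1 w) (wordSeries IsAdmissible) =
      Nat.card {q : Fin n → Base //
          (Finset.univ.filter (fun i : Fin n => q i = Base.G ∨ q i = Base.C)).card = w ∧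
          ∀ ℓ, ∀ h : ℓ + 1 < n,
            q ⟨ℓ + 1, h⟩ ≠ (q ⟨ℓ, Nat.lt_of_succ_lt h⟩).compl} := by
  rw [coeff_wordSeries]
  norm_cast
  symm
  refine Nat.card_eq_of_bijective
    (fun q => ⟨List.ofFn q.1, (wordWeight_ofFn_eq_and_isAdmissible_iff q.1 w).2 q.2⟩)
    ⟨fun q q' h => Subtype.ext (List.ofFn_injective (congrArg Subtype.val h)), ?_⟩
  rintro ⟨l, hl⟩
  obtain rfl : l.length = n := by simpa [wordWeight_apply_zero] using congrArg (· 0) hl.1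
  refine ⟨⟨l.get, (wordWeight_ofFn_eq_and_isAdmissible_iff l.get w).1 ?_⟩,
    Subtype.ext (List.ofFn_get l)⟩
  rwa [List.ofFn_get]

/-- The number of length-`n` DNA sequences with GC-content `w` and no two consecutive
Watson-Crick complementary letters (`μ_1(q) = 0`) equals the coefficient of `x^n y^w`
in the formal power series expansion of `Φ(x,y) = (1 - 2x/(1+x) - 2xy/(1+xy))⁻¹`. -/
theorem stmt18 (n w : ℕ) :
    (MvPowerSeries.coeff (Finsupp.single 0 n + Finsupp.single 1 w)) Phi
      = (Nat.card {q : Fin n → Base //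
          (Finset.univ.filter (fun i : Fin n => q i = Base.G ∨ q i = Base.C)).card = w ∧
          ∀ ℓ, ∀ h : ℓ + 1 < n, q ⟨ℓ + 1, h⟩ ≠ (q ⟨ℓ, by omega⟩).compl} : ℚ) := by
  rw [← wordSeries_isAdmissible_eq_Phi, coeff_wordSeries_isAdmissible]
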